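/- arXiv:1912.08623 — 5 statements merged into one kernel-verified Lean document; each statement's English description precedes it below -/
import Mathlib

section
/- For N = 0, with γ = α/ε + 1 and q = α(1 - δ/ε) and ε ≠ 0, the sequence c_n defined by c_0 = 1 and c_n / c_{n-1} = ((α/ε - 1 + n)(δ - 1 + n)) / ((γ + δ - 1 + n) n) satisfies the three-term recurrence R_n c_n + Q_{n-1} c_{n-1} + P_{n-2} c_{n-2} = 0 for all n ≥ 2. -/
/-!
Clearing denominators in the two-term ratio gives
`R_n c_n = -(α/ε - 1 + n)(δ - 1 + n) c_{n-1}` and `P_{n-2} c_{n-2} = -ε (n - 1) c_{n-1}`.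
When `γ = α/ε + 1` and `q = α (1 - δ/ε)`, the middle coefficient `Q_{n-1}` is exactly
`(α/ε - 1 + n)(δ - 1 + n) + ε (n - 1)`, so the three terms cancel.
-/

theorem mul_eq_mul_of_ratio_eq {K : Type*} [Field K] [CharZero K] {a b s : K} {c : ℕ → K}
    {n : ℕ} (hn : 1 ≤ n) (hs : s - 1 + n ≠ 0)
    (h : c n = (a - 1 + n) * (b - 1 + n) / ((s - 1 + n) * n) * c (n - 1)) :
    n * (s - 1 + n) * c n = (a - 1 + n) * (b - 1 + n) * c (n - 1) := by
  have hn' : (n : K) ≠ 0 := Nat.cast_ne_zero.mpr (by omega)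
  rw [h]
  field_simp

theorem stmt0_general (α γ δ ε q : ℂ) (hε : ε ≠ 0)
    (hγ : γ = α / ε + 1) (hq : q = α * (1 - δ / ε))
    (hden : ∀ n : ℕ, γ + δ + (n : ℂ) ≠ 0 ∧ γ + δ - 1 + (n : ℂ) ≠ 0)
    (c : ℕ → ℂ)
    (hrat : ∀ n : ℕ, 1 ≤ n →
      c n = ((α / ε - 1 + (n : ℂ)) * (δ - 1 + (n : ℂ))) /
        ((γ + δ - 1 + (n : ℂ)) * (n : ℂ)) * c (n - 1)) :
    ∀ n : ℕ, 2 ≤ n →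
      (-(n : ℂ) * (γ + δ + (n : ℂ) - 1)) * c n
      + (-q + α + (γ + δ + ε + ((n : ℂ) - 1) - 1) * ((n : ℂ) - 1)) * c (n - 1)
      + (-((δ + ((n : ℂ) - 2)) * (ε * ((n : ℂ) - 2) + α)) / (γ + δ + ((n : ℂ) - 2)))
          * c (n - 2) = 0 := by
  intro n hn
  obtain ⟨a, rfl⟩ : ∃ a, α = ε * a := ⟨α / ε, (mul_div_cancel₀ α hε).symm⟩
  rw [mul_div_cancel_left₀ a hε] at hγ hrat
  subst hγ hq
  obtain ⟨m, rfl⟩ : ∃ m, n = m + 2 := ⟨n - 2, by omega⟩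
  have hs₀ : a + 1 + δ + (m : ℂ) ≠ 0 := (hden m).1
  have hs₁ : a + 1 + δ - 1 + ((m + 2 : ℕ) : ℂ) ≠ 0 := by
    push_cast; convert (hden (m + 1)).1 using 1; push_cast; ring
  have hs₂ : a + 1 + δ - 1 + ((m + 1 : ℕ) : ℂ) ≠ 0 := by push_cast; convert hs₀ using 1; ring
  have hR := mul_eq_mul_of_ratio_eq (by omega) hs₁ (hrat (m + 2) (by omega))
  have hP := mul_eq_mul_of_ratio_eq (by omega) hs₂ (hrat (m + 1) (by omega))
  simp only [Nat.add_sub_cancel, Nat.reduceSubDiff] at hR hP ⊢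
  push_cast at hR hP ⊢
  have hQ : -(ε * a * (1 - δ / ε)) + ε * a = a * δ := by field_simp; ring
  have hPc : -((δ + (m + 2 - 2)) * (ε * (m + 2 - 2) + ε * a)) / (a + 1 + δ + (m + 2 - 2)) * c m
      = -(ε * (m + 1)) * c (m + 1) := by
    rw [div_mul_eq_mul_div, div_eq_iff (by convert hs₀ using 1; ring)]
    linear_combination ε * hP
  rw [hQ, hPc]
  linear_combination -hR

/-- For N = 0, with γ = α/ε + 1 and q = α(1 - δ/ε) and ε ≠ 0, the sequence
c_n defined by c_0 = 1 and the two-term ratio satisfies the three-term recurrence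
R_n c_n + Q_{n-1} c_{n-1} + P_{n-2} c_{n-2} = 0 for all n ≥ 2. -/
theorem stmt0 (α γ δ ε q : ℂ) (hε : ε ≠ 0)
    (hγ : γ = α / ε + 1) (hq : q = α * (1 - δ / ε))
    (hden : ∀ n : ℕ, γ + δ + (n : ℂ) ≠ 0 ∧ γ + δ - 1 + (n : ℂ) ≠ 0)
    (c : ℕ → ℂ) (hc0 : c 0 = 1)
    (hrat : ∀ n : ℕ, 1 ≤ n →
      c n = ((α / ε - 1 + (n : ℂ)) * (δ - 1 + (n : ℂ))) /
        ((γ + δ - 1 + (n : ℂ)) * (n : ℂ)) * c (n - 1)) :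
    ∀ n : ℕ, 2 ≤ n →
      (-(n : ℂ) * (γ + δ + (n : ℂ) - 1)) * c n
      + (-q + α + (γ + δ + ε + ((n : ℂ) - 1) - 1) * ((n : ℂ) - 1)) * c (n - 1)
      + (-((δ + ((n : ℂ) - 2)) * (ε * ((n : ℂ) - 2) + α)) / (γ + δ + ((n : ℂ) - 2)))
          * c (n - 2) = 0 :=
  stmt0_general α γ δ ε q hε hγ hq hden c hrat
end

section
/- Let ε ≠ 0 and consider the polynomial in n given by -(α/ε - 1 + n)(δ - 1 + n)∏_{k=1}^N(e_k + n) + Q_{n-1}∏_{k=1}^N(e_k - 1 + n) - ε(n-1)∏_{k=1}^N(e_k - 2 + n) with Q_n = -q + α + (γ + δ + ε + n - 1)n. Its coefficient of n^{N+1} equals γ - N - 1 - α/ε; hence if the polynomial vanishes identically then γ = α/ε + 1 + N. -/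
/-!
Apart from the summand `C (-q + α) * ∏ (C (e k - 1) + X)`, of degree `N`, every term is a product
of factors `C a + X`. The first two are monic of degree `N + 2` and enter with opposite signs, so
the coefficient of `n^{N+1}` is the difference of their sums of constants `a`, in which `∑ e_k`
cancels down to `-N`; the last term has degree `N + 1` and contributes `-ε`.
-/

open Polynomial Finset

namespace Polynomial

variable {R ι : Type*} [CommSemiring R]

theorem monic_C_add_X (a : R) : (C a + X).Monic :=
  add_comm X (C a) ▸ monic_X_add_C a

theorem monic_prod_C_add_X (s : Finset ι) (a : ι → R) : (∏ k ∈ s, (C (a k) + X)).Monic :=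
  monic_prod_of_monic _ _ fun k _ => monic_C_add_X (a k)

theorem natDegree_C_add_X [Nontrivial R] (a : R) : (C a + X).natDegree = 1 := by
  rw [add_comm, natDegree_X_add_C]

theorem natDegree_prod_C_add_X [Nontrivial R] (s : Finset ι) (a : ι → R) :
    (∏ k ∈ s, (C (a k) + X)).natDegree = #s := by
  rw [natDegree_prod_of_monic _ _ fun k _ => monic_C_add_X (a k)]
  simp

theorem nextCoeff_prod_C_add_X (s : Finset ι) (a : ι → R) :
    (∏ k ∈ s, (C (a k) + X)).nextCoeff = ∑ k ∈ s, a k := by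
  rw [Monic.nextCoeff_prod _ _ fun k _ => monic_C_add_X (a k)]
  simp [add_comm, nextCoeff_X_add_C]

theorem coeff_eq_nextCoeff_of_natDegree_eq_succ {p : R[X]} {n : ℕ} (h : p.natDegree = n + 1) :
    p.coeff n = p.nextCoeff := by
  rw [nextCoeff_of_natDegree_pos (by omega), h, Nat.add_sub_cancel]

variable [Nontrivial R] {s : Finset ι} {n : ℕ}

theorem coeff_prod_C_add_X_of_card_lt {m : ℕ} (a : ι → R) (hs : #s < m) :
    (∏ k ∈ s, (C (a k) + X)).coeff m = 0 :=
  coeff_eq_zero_of_natDegree_lt (natDegree_prod_C_add_X s a ▸ hs)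

theorem coeff_mul_prod_C_add_X_of_card (b : R) (a : ι → R) (hs : #s = n) :
    ((C b + X) * ∏ k ∈ s, (C (a k) + X)).coeff (n + 1) = 1 := by
  have hmonic := (monic_C_add_X b).mul (monic_prod_C_add_X s a)
  rw [← hmonic.coeff_natDegree, (monic_C_add_X b).natDegree_mul (monic_prod_C_add_X s a),
    natDegree_C_add_X, natDegree_prod_C_add_X, hs, add_comm 1 n]

theorem coeff_mul_mul_prod_C_add_X_of_card (b c : R) (a : ι → R) (hs : #s = n) :
    ((C b + X) * (C c + X) * ∏ k ∈ s, (C (a k) + X)).coeff (n + 1) = b + c + ∑ k ∈ s, a k := by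
  have hbc := (monic_C_add_X b).mul (monic_C_add_X c)
  have hdeg : ((C b + X) * (C c + X) * ∏ k ∈ s, (C (a k) + X)).natDegree = n + 1 + 1 := by
    rw [hbc.natDegree_mul (monic_prod_C_add_X s a),
      (monic_C_add_X b).natDegree_mul (monic_C_add_X c), natDegree_C_add_X, natDegree_C_add_X,
      natDegree_prod_C_add_X, hs]
    ring
  rw [coeff_eq_nextCoeff_of_natDegree_eq_succ hdeg, hbc.nextCoeff_mul (monic_prod_C_add_X s a),
    (monic_C_add_X b).nextCoeff_mul (monic_C_add_X c), nextCoeff_prod_C_add_X, add_comm (C b),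
    add_comm (C c), nextCoeff_X_add_C, nextCoeff_X_add_C]

end Polynomial

theorem stmt4_general (N : ℕ) (α γ δ ε q : ℂ) (e : ℕ → ℂ) :
    (-((C (α / ε - 1) + X) * (C (δ - 1) + X) * ∏ k ∈ Icc 1 N, (C (e k) + X))
      + (C (-q + α) + (C (γ + δ + ε - 2) + X) * (X - 1)) *
          ∏ k ∈ Icc 1 N, (C (e k - 1) + X)
      - C ε * (X - 1) * ∏ k ∈ Icc 1 N, (C (e k - 2) + X) : ℂ[X]).coeff (N + 1)
      = γ - N - 1 - α / ε
    ∧ ((-((C (α / ε - 1) + X) * (C (δ - 1) + X) * ∏ k ∈ Icc 1 N, (C (e k) + X))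
      + (C (-q + α) + (C (γ + δ + ε - 2) + X) * (X - 1)) *
          ∏ k ∈ Icc 1 N, (C (e k - 1) + X)
      - C ε * (X - 1) * ∏ k ∈ Icc 1 N, (C (e k - 2) + X) : ℂ[X]) = 0
      → γ = α / ε + 1 + N) := by
  have hcard : #(Icc 1 N) = N := by simp
  have hX_sub_one : (X - 1 : ℂ[X]) = C (-1) + X := by simp [sub_eq_neg_add]
  have hcoeff : (-((C (α / ε - 1) + X) * (C (δ - 1) + X) * ∏ k ∈ Icc 1 N, (C (e k) + X))
      + (C (-q + α) + (C (γ + δ + ε - 2) + X) * (X - 1)) *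
          ∏ k ∈ Icc 1 N, (C (e k - 1) + X)
      - C ε * (X - 1) * ∏ k ∈ Icc 1 N, (C (e k - 2) + X) : ℂ[X]).coeff (N + 1)
      = γ - N - 1 - α / ε := by
    rw [hX_sub_one, add_mul (C (-q + α)), mul_assoc (C ε), coeff_sub, coeff_add, coeff_neg, coeff_add,
      coeff_C_mul, coeff_C_mul, coeff_prod_C_add_X_of_card_lt _ (by omega),
      coeff_mul_mul_prod_C_add_X_of_card _ _ _ hcard,
      coeff_mul_mul_prod_C_add_X_of_card _ _ _ hcard, coeff_mul_prod_C_add_X_of_card _ _ hcard,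
      sum_sub_distrib, sum_const, hcard, nsmul_eq_mul]
    ring
  refine ⟨hcoeff, fun hzero => ?_⟩
  rw [hzero, coeff_zero] at hcoeff
  linear_combination -hcoeff

/-- The coefficient of n^{N+1} of the reduced-recurrence polynomial equals
γ - N - 1 - α/ε; hence if the polynomial vanishes identically then γ = α/ε + 1 + N. -/
theorem stmt4 (N : ℕ) (α γ δ ε q : ℂ) (hε : ε ≠ 0) (e : ℕ → ℂ) :
    (-((C (α / ε - 1) + X) * (C (δ - 1) + X) * ∏ k ∈ Icc 1 N, (C (e k) + X))
      + (C (-q + α) + (C (γ + δ + ε - 2) + X) * (X - 1)) *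
          ∏ k ∈ Icc 1 N, (C (e k - 1) + X)
      - C ε * (X - 1) * ∏ k ∈ Icc 1 N, (C (e k - 2) + X) : ℂ[X]).coeff (N + 1)
      = γ - N - 1 - α / ε
    ∧ ((-((C (α / ε - 1) + X) * (C (δ - 1) + X) * ∏ k ∈ Icc 1 N, (C (e k) + X))
      + (C (-q + α) + (C (γ + δ + ε - 2) + X) * (X - 1)) *
          ∏ k ∈ Icc 1 N, (C (e k - 1) + X)
      - C ε * (X - 1) * ∏ k ∈ Icc 1 N, (C (e k - 2) + X) : ℂ[X]) = 0
      → γ = α / ε + 1 + N) :=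
  stmt4_general N α γ δ ε q e
end

section
/- For the case ε = 0, N = 2: suppose α ≠ 0, γ = -2, e_1 and e_2 are not zero or negative integers, and the relations e_1 + e_2 + q + 3 - 2δ = 0, q(e_1 e_2 - α) + 2α(δ - 1) = 0, and q³ + q²(4 - 3δ) + q(4 - 4α - 6δ + 2δ²) + 4α(δ - 1) = 0 hold. Then c_n = αⁿ Γ(δ-2)(e_1+n)(e_2+n) / (n! Γ(n+δ-2) e_1 e_2) satisfies R_n c_n + Q_{n-1} c_{n-1} + P_{n-2} c_{n-2} = 0 for all n ≥ 2, with R_n = -n(δ + n - 3), Q_n = -q + α + n(δ + n - 3), P_n = -(δ + n)α/(δ + n - 2). -/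
/-!
Up to the constant `Γ(δ - 2) / (e₁ e₂)`, `c n` is the product of the hypergeometric term
`tₙ = αⁿ / (n! Γ(n + δ - 2))`, which satisfies the first-order recurrence
`(n + 1)(n + δ - 2) tₙ₊₁ = α tₙ`, and the quadratic `(e₁ + n)(e₂ + n)`. Using it to express
`c n`, `c (n - 1)`, `c (n - 2)` through `tₙ₋₁` turns the three-term recurrence into a polynomial
identity in `n`, which is a linear combination of the three relations between `q`, `e₁`, `e₂`,
`α`, `δ` once it is multiplied by `q`; and `q ≠ 0`, since otherwise `α (δ - 1) = 0`.
-/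

open Complex

noncomputable def hypergeometricTerm (a s : ℂ) (n : ℕ) : ℂ :=
  a ^ n / (n.factorial * Gamma (n + s))

lemma hypergeometricTerm_succ (a s : ℂ) (n : ℕ) (hs : (n : ℂ) + s ≠ 0) :
    ((n : ℂ) + 1) * ((n : ℂ) + s) * hypergeometricTerm a s (n + 1)
      = a * hypergeometricTerm a s n := by
  have hn : (n : ℂ) + 1 ≠ 0 := by exact_mod_cast n.succ_ne_zero
  rw [hypergeometricTerm, hypergeometricTerm,
    show ((n + 1 : ℕ) : ℂ) + s = (n + s) + 1 by push_cast; ring, Gamma_add_one _ hs,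
    Nat.factorial_succ]
  push_cast
  field_simp
  ring

lemma q_ne_zero_of_relation {α δ q e₁ e₂ : ℂ} (hα : α ≠ 0) (hδ : δ ≠ 1)
    (h2 : q * (e₁ * e₂ - α) + 2 * α * (δ - 1) = 0) : q ≠ 0 := by
  rintro rfl
  have : α * (δ - 1) = 0 := by linear_combination h2 / 2
  exact mul_ne_zero hα (sub_ne_zero.mpr hδ) this

lemma quadratic_three_term_identity {α δ q e₁ e₂ : ℂ} (x : ℂ) (hq : q ≠ 0)
    (h1 : e₁ + e₂ + q + 3 - 2 * δ = 0)
    (h2 : q * (e₁ * e₂ - α) + 2 * α * (δ - 1) = 0)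
    (h3 : q ^ 3 + q ^ 2 * (4 - 3 * δ) + q * (4 - 4 * α - 6 * δ + 2 * δ ^ 2)
      + 4 * α * (δ - 1) = 0) :
    -α * ((e₁ + (x + 2)) * (e₂ + (x + 2)))
      + (-q + α + (x + 1) * (δ + x - 2)) * ((e₁ + (x + 1)) * (e₂ + (x + 1)))
      - (δ + x) * (x + 1) * ((e₁ + x) * (e₂ + x)) = 0 := by
  refine (mul_eq_zero.mp ?_).resolve_left hq
  linear_combination (q * ((x + 1) * (δ - q - x - 2) - α)) * h1
    - (q + 2 * x + 2) * h2 + (x + 1) * h3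

lemma three_term_of_first_order {α δ q e₁ e₂ x t₀ t₁ t₂ : ℂ} (hx : x + (δ - 2) ≠ 0)
    (ht₁ : (x + 1) * (x + (δ - 2)) * t₁ = α * t₀)
    (ht₂ : (x + 2) * (x + 1 + (δ - 2)) * t₂ = α * t₁)
    (hkey : -α * ((e₁ + (x + 2)) * (e₂ + (x + 2)))
      + (-q + α + (x + 1) * (δ + x - 2)) * ((e₁ + (x + 1)) * (e₂ + (x + 1)))
      - (δ + x) * (x + 1) * ((e₁ + x) * (e₂ + x)) = 0) :
    -(x + 2) * (δ + x - 1) * (t₂ * ((e₁ + (x + 2)) * (e₂ + (x + 2))))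
      + (-q + α + (x + 1) * (δ + x - 2)) * (t₁ * ((e₁ + (x + 1)) * (e₂ + (x + 1))))
      + -((δ + x) * α) / (δ + x - 2) * (t₀ * ((e₁ + x) * (e₂ + x))) = 0 := by
  have hP : -((δ + x) * α) / (δ + x - 2) * (t₀ * ((e₁ + x) * (e₂ + x)))
      = -(δ + x) * (x + 1) * (t₁ * ((e₁ + x) * (e₂ + x))) := by
    rw [div_mul_eq_mul_div, div_eq_iff fun h => hx (by linear_combination h)]
    linear_combination ((δ + x) * ((e₁ + x) * (e₂ + x))) * ht₁
  rw [hP]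
  linear_combination t₁ * hkey - ((e₁ + (x + 2)) * (e₂ + (x + 2))) * ht₂

theorem stmt10_general (α δ q e₁ e₂ : ℂ) (hα : α ≠ 0)
    (h1 : e₁ + e₂ + q + 3 - 2 * δ = 0)
    (h2 : q * (e₁ * e₂ - α) + 2 * α * (δ - 1) = 0)
    (h3 : q ^ 3 + q ^ 2 * (4 - 3 * δ) + q * (4 - 4 * α - 6 * δ + 2 * δ ^ 2)
      + 4 * α * (δ - 1) = 0)
    (hδ : ∀ m : ℕ, δ - 2 ≠ -(m : ℂ))
    (c : ℕ → ℂ)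
    (hc : ∀ n : ℕ, c n = α ^ n * Complex.Gamma (δ - 2) * (e₁ + (n : ℂ)) * (e₂ + (n : ℂ)) /
      ((n.factorial : ℂ) * Complex.Gamma ((n : ℂ) + δ - 2) * e₁ * e₂)) :
    ∀ n : ℕ, 2 ≤ n →
      (-(n : ℂ) * (δ + (n : ℂ) - 3)) * c n
      + (-q + α + ((n : ℂ) - 1) * (δ + ((n : ℂ) - 1) - 3)) * c (n - 1)
      + (-((δ + ((n : ℂ) - 2)) * α) / (δ + ((n : ℂ) - 2) - 2)) * c (n - 2) = 0 := by
  have hshift (m : ℕ) : (m : ℂ) + (δ - 2) ≠ 0 := fun h => hδ m (by linear_combination h)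
  have hq : q ≠ 0 := q_ne_zero_of_relation hα (fun h => hδ 1 (by rw [h]; norm_num)) h2
  set K := Gamma (δ - 2) / (e₁ * e₂)
  set t := hypergeometricTerm α (δ - 2)
  have hct (n : ℕ) : c n = K * t n * ((e₁ + n) * (e₂ + n)) := by
    rw [hc, add_sub_assoc]; simp only [t, K, hypergeometricTerm]; ring
  intro n hn
  obtain ⟨k, rfl⟩ := Nat.exists_eq_add_of_le' hn
  have ht₁ : ((k : ℂ) + 1) * (k + (δ - 2)) * (K * t (k + 1)) = α * (K * t k) := by
    linear_combination K * hypergeometricTerm_succ α _ k (hshift k)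
  have ht₂ : ((k : ℂ) + 2) * (k + 1 + (δ - 2)) * (K * t (k + 2)) = α * (K * t (k + 1)) := by
    have := hypergeometricTerm_succ α _ (k + 1) (by exact_mod_cast hshift (k + 1))
    push_cast at this
    linear_combination K * this
  have h := three_term_of_first_order (hshift k) ht₁ ht₂
    (quadratic_three_term_identity (k : ℂ) hq h1 h2 h3)
  rw [Nat.add_sub_cancel, show k + 2 - 1 = k + 1 from rfl, hct, hct, hct]
  push_cast
  linear_combination h

/-- For ε = 0, N = 2: with α ≠ 0, γ = -2, e₁, e₂ not zero or negative
integers, and the relations (58)-(59), the coefficients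
c_n = αⁿ Γ(δ-2)(e₁+n)(e₂+n)/(n! Γ(n+δ-2) e₁ e₂) satisfy the three-term recurrence
for all n ≥ 2. -/
theorem stmt10 (α γ δ q e₁ e₂ : ℂ) (hα : α ≠ 0) (hγ : γ = -2)
    (he₁ : ∀ m : ℕ, e₁ ≠ -(m : ℂ)) (he₂ : ∀ m : ℕ, e₂ ≠ -(m : ℂ))
    (h1 : e₁ + e₂ + q + 3 - 2 * δ = 0)
    (h2 : q * (e₁ * e₂ - α) + 2 * α * (δ - 1) = 0)
    (h3 : q ^ 3 + q ^ 2 * (4 - 3 * δ) + q * (4 - 4 * α - 6 * δ + 2 * δ ^ 2)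
      + 4 * α * (δ - 1) = 0)
    (hδ : ∀ m : ℕ, δ - 2 ≠ -(m : ℂ))
    (c : ℕ → ℂ)
    (hc : ∀ n : ℕ, c n = α ^ n * Complex.Gamma (δ - 2) * (e₁ + (n : ℂ)) * (e₂ + (n : ℂ)) /
      ((n.factorial : ℂ) * Complex.Gamma ((n : ℂ) + δ - 2) * e₁ * e₂)) :
    ∀ n : ℕ, 2 ≤ n →
      (-(n : ℂ) * (δ + (n : ℂ) - 3)) * c n
      + (-q + α + ((n : ℂ) - 1) * (δ + ((n : ℂ) - 1) - 3)) * c (n - 1)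
      + (-((δ + ((n : ℂ) - 2)) * α) / (δ + ((n : ℂ) - 2) - 2)) * c (n - 2) = 0 :=
  stmt10_general α δ q e₁ e₂ hα h1 h2 h3 hδ c hc
end

section
/- For N = 1 with ε ≠ 0 and γ = α/ε + 2: if e_1 = q - α + δ - ε + α(1+δ)/ε, then the constant term and linear coefficient (in n) of the polynomial -(α/ε - 1 + n)(δ - 1 + n)(e_1 + n) + Q_{n-1}(e_1 - 1 + n) - ε(n-1)(e_1 - 2 + n), where Q_n = -q + α + (γ + δ + ε + n - 1)n, both vanish if and only if q satisfies q² + q(α(1+2δ)/ε - 2α - ε + δ) + (α/ε)((α/ε)(δ-ε)(1+δ-ε) + δ + δ² - 2δε + ε²) = 0. -/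
/-!
The cubic terms cancel identically and the quadratic coefficient is `γ - α/ε - 2`, so the
polynomial is really linear in `n`. Once `e₁` is substituted, its linear coefficient vanishes
identically and its constant term is minus the quadratic in `q`.
-/

open Polynomial

section

variable {R : Type*} [CommRing R]

/-- The paper's polynomial for `N = 1`, with `a` standing for `α / ε` and
`Q_{n-1} = -q + α + (γ + δ + ε + n - 2) (n - 1)`. -/
noncomputable def reducedPoly (a α γ δ ε q e : R) : R[X] :=
  -((C (a - 1) + X) * (C (δ - 1) + X) * (C e + X))
    + (C (-q + α) + (C (γ + δ + ε - 2) + X) * (X - 1)) * (C (e - 1) + X)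
    - C ε * (X - 1) * (C (e - 2) + X)

theorem reducedPoly_eq (a α γ δ ε q e : R) :
    reducedPoly a α γ δ ε q e =
      C (-(a - 1) * (δ - 1) * e + (α - q - (γ + δ + ε - 2)) * (e - 1) - ε * (2 - e))
      + C (-((δ - 1) * e + (a - 1) * e + (a - 1) * (δ - 1)) + (γ + δ + ε - 3) * (e - 1)
          + (α - q - (γ + δ + ε - 2)) - ε * (e - 3)) * X
      + C (γ - a - 2) * X ^ 2 := by
  simp only [reducedPoly, map_add, map_sub, map_mul, map_neg, map_one, map_ofNat]
  ring

theorem coeff_zero_reducedPoly (a α γ δ ε q e : R) :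
    (reducedPoly a α γ δ ε q e).coeff 0 =
      -(a - 1) * (δ - 1) * e + (α - q - (γ + δ + ε - 2)) * (e - 1) - ε * (2 - e) := by
  simp only [reducedPoly_eq, coeff_add, coeff_C, coeff_C_mul_X, coeff_C_mul_X_pow]
  norm_num

theorem coeff_one_reducedPoly (a α γ δ ε q e : R) :
    (reducedPoly a α γ δ ε q e).coeff 1 =
      -((δ - 1) * e + (a - 1) * e + (a - 1) * (δ - 1)) + (γ + δ + ε - 3) * (e - 1)
          + (α - q - (γ + δ + ε - 2)) - ε * (e - 3) := by
  simp only [reducedPoly_eq, coeff_add, coeff_C, coeff_C_mul_X, coeff_C_mul_X_pow]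
  norm_num

end

section

variable {K : Type*} [Field K] {α δ ε q : K}

theorem coeff_one_reducedPoly_eq_zero (hε : ε ≠ 0) :
    (reducedPoly (α / ε) α (α / ε + 2) δ ε q (q - α + δ - ε + α * (1 + δ) / ε)).coeff 1 = 0 := by
  rw [coeff_one_reducedPoly]
  field_simp
  ring

theorem coeff_zero_reducedPoly_eq (hε : ε ≠ 0) :
    (reducedPoly (α / ε) α (α / ε + 2) δ ε q (q - α + δ - ε + α * (1 + δ) / ε)).coeff 0 =
      -(q ^ 2 + q * (α * (1 + 2 * δ) / ε - 2 * α - ε + δ)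
        + (α / ε) * ((α / ε) * (δ - ε) * (1 + δ - ε) + δ + δ ^ 2 - 2 * δ * ε + ε ^ 2)) := by
  rw [coeff_zero_reducedPoly]
  field_simp
  ring

end

/-- For N = 1, ε ≠ 0, γ = α/ε + 2 and e₁ = q - α + δ - ε + α(1+δ)/ε, the
constant and linear coefficients of the reduced polynomial both vanish if and only if
q satisfies the quadratic equation (20). -/
theorem stmt14 (α γ δ ε q e₁ : ℂ) (hε : ε ≠ 0)
    (hγ : γ = α / ε + 2)
    (he₁ : e₁ = q - α + δ - ε + α * (1 + δ) / ε) :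
    ((-((C (α / ε - 1) + X) * (C (δ - 1) + X) * (C e₁ + X))
      + (C (-q + α) + (C (γ + δ + ε - 2) + X) * (X - 1)) * (C (e₁ - 1) + X)
      - C ε * (X - 1) * (C (e₁ - 2) + X) : ℂ[X]).coeff 0 = 0
    ∧ (-((C (α / ε - 1) + X) * (C (δ - 1) + X) * (C e₁ + X))
      + (C (-q + α) + (C (γ + δ + ε - 2) + X) * (X - 1)) * (C (e₁ - 1) + X)
      - C ε * (X - 1) * (C (e₁ - 2) + X) : ℂ[X]).coeff 1 = 0)
    ↔ q ^ 2 + q * (α * (1 + 2 * δ) / ε - 2 * α - ε + δ)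
        + (α / ε) * ((α / ε) * (δ - ε) * (1 + δ - ε) + δ + δ ^ 2 - 2 * δ * ε + ε ^ 2) = 0 := by
  subst hγ he₁
  change (reducedPoly _ _ _ _ _ _ _).coeff 0 = 0 ∧ (reducedPoly _ _ _ _ _ _ _).coeff 1 = 0 ↔ _
  rw [coeff_zero_reducedPoly_eq hε, coeff_one_reducedPoly_eq_zero hε, neg_eq_zero]
  exact and_iff_left rfl
end

section
/- Let N = 2 and ε ≠ 0, γ = α/ε + 3. If e_1, e_2 satisfy e_1 + e_2 = q + 1 - α + 2δ - 2ε + α(2+δ)/ε and 2e_1e_2 + (ε - δ - q - (α/ε)(1 + δ - ε))(e_1 + e_2) - (α + 2αδ + ε(δ + ε))/ε = 0, and q satisfies the cubic equation (24) of the paper, then the polynomial in n given by -(α/ε - 1 + n)(δ - 1 + n)(e_1 + n)(e_2 + n) + Q_{n-1}(e_1 - 1 + n)(e_2 - 1 + n) - ε(n-1)(e_1 - 2 + n)(e_2 - 2 + n), with Q_n = -q + α + (γ + δ + ε + n - 1)n, vanishes identically in n. -/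
/-!
Put `β = α / ε` and `m = n - 1`. The terms of degree four and three in `m` cancel, and the
polynomial becomes `R₂₅ m² + R₂₆ m - c₀`, where `R₂₅` and `R₂₆` are the residuals of (25) and (26)
and `c₀ = (q + β(δ - ε)) e₁e₂ + βδ(e₁ + e₂ + 1)`. Eliminating `e₁ + e₂` and `e₁e₂` by (25) and (26)
turns `2c₀` into the left side of the cubic (24).
-/

section

variable {R : Type*} [CommRing R]

theorem reduced_poly_eq_quadratic (β δ ε q e₁ e₂ n : R) :
    -((β - 1 + n) * (δ - 1 + n) * (e₁ + n) * (e₂ + n))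
      + (-q + ε * β + (β + 3 + δ + ε + (n - 1) - 1) * (n - 1)) * (e₁ - 1 + n) * (e₂ - 1 + n)
      - ε * (n - 1) * (e₁ - 2 + n) * (e₂ - 2 + n)
    = (e₁ + e₂ - (q + 1 - ε * β + 2 * δ - 2 * ε + β * (2 + δ))) * (n - 1) ^ 2
      + (2 * e₁ * e₂ + (ε - δ - q - β * (1 + δ - ε)) * (e₁ + e₂)
        - (β + 2 * β * δ + δ + ε)) * (n - 1)
      - ((q + β * (δ - ε)) * e₁ * e₂ + β * δ * (e₁ + e₂ + 1)) := by
  ring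

theorem two_mul_constant_coeff_eq_cubic {β δ ε q e₁ e₂ : R}
    (hs : e₁ + e₂ - (q + 1 - ε * β + 2 * δ - 2 * ε + β * (2 + δ)) = 0)
    (hp : 2 * e₁ * e₂ + (ε - δ - q - β * (1 + δ - ε)) * (e₁ + e₂)
      - (β + 2 * β * δ + δ + ε) = 0) :
    2 * ((q + β * (δ - ε)) * e₁ * e₂ + β * δ * (e₁ + e₂ + 1))
    = q ^ 3
      + q ^ 2 * (1 + 3 * δ - 3 * ε - 3 * ε * β + 3 * β * (1 + δ))
      + q * (β ^ 2 * (2 + 3 * δ ^ 2 - 6 * δ * (ε - 1) + 3 * ε * (ε - 2))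
        + 2 * β * (1 + 3 * δ ^ 2 + δ * (5 - 6 * ε) + 3 * ε * (ε - 1))
        + 2 * (δ + δ ^ 2 - 2 * δ * ε + ε ^ 2))
      + β * (β ^ 2 * (δ - ε) * (1 + δ - ε) * (2 + δ - ε)
        + β * (1 + δ - ε) * (3 * δ * (2 + δ) - 2 * (1 + 3 * δ) * ε + 3 * ε ^ 2)
        + 2 * (δ * (1 + δ) * (2 + δ) - 3 * δ * (1 + δ) * ε + 3 * δ * ε ^ 2 - ε ^ 3)) := by
  linear_combination ((q + β * (δ - ε)) * (q + δ - ε + β * (1 + δ - ε)) + 2 * β * δ) * hs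
    + (q + β * (δ - ε)) * hp

end

/-- For N = 2, ε ≠ 0, γ = α/ε + 3: if e₁, e₂ satisfy (25)-(26) and q
satisfies the cubic (24), then the reduced polynomial vanishes identically in n. -/
theorem stmt17 (α γ δ ε q e₁ e₂ : ℂ) (hε : ε ≠ 0)
    (hγ : γ = α / ε + 3)
    (h25 : e₁ + e₂ = q + 1 - α + 2 * δ - 2 * ε + α * (2 + δ) / ε)
    (h26 : 2 * e₁ * e₂ + (ε - δ - q - (α / ε) * (1 + δ - ε)) * (e₁ + e₂)
      - (α + 2 * α * δ + ε * (δ + ε)) / ε = 0)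
    (h24 : q ^ 3
      + q ^ 2 * (1 + 3 * δ - 3 * ε - 3 * α + 3 * α * (1 + δ) / ε)
      + q * ((α ^ 2 / ε ^ 2) * (2 + 3 * δ ^ 2 - 6 * δ * (ε - 1) + 3 * ε * (ε - 2))
        + 2 * (α / ε) * (1 + 3 * δ ^ 2 + δ * (5 - 6 * ε) + 3 * ε * (ε - 1))
        + 2 * (δ + δ ^ 2 - 2 * δ * ε + ε ^ 2))
      + (α / ε) * ((α ^ 2 / ε ^ 2) * (δ - ε) * (1 + δ - ε) * (2 + δ - ε)
        + (α / ε) * (1 + δ - ε) * (3 * δ * (2 + δ) - 2 * (1 + 3 * δ) * ε + 3 * ε ^ 2)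
        + 2 * (δ * (1 + δ) * (2 + δ) - 3 * δ * (1 + δ) * ε + 3 * δ * ε ^ 2 - ε ^ 3)) = 0) :
    ∀ n : ℂ,
      -((α / ε - 1 + n) * (δ - 1 + n) * (e₁ + n) * (e₂ + n))
      + (-q + α + (γ + δ + ε + (n - 1) - 1) * (n - 1)) * (e₁ - 1 + n) * (e₂ - 1 + n)
      - ε * (n - 1) * (e₁ - 2 + n) * (e₂ - 2 + n) = 0 := by
  intro n
  obtain ⟨β, rfl⟩ : ∃ β, α = ε * β := ⟨α / ε, (mul_div_cancel₀ α hε).symm⟩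
  subst hγ
  rw [mul_div_cancel_left₀ β hε]
  have hs : e₁ + e₂ - (q + 1 - ε * β + 2 * δ - 2 * ε + β * (2 + δ)) = 0 := by
    rw [h25]; field_simp; ring
  have hp : 2 * e₁ * e₂ + (ε - δ - q - β * (1 + δ - ε)) * (e₁ + e₂)
      - (β + 2 * β * δ + δ + ε) = 0 := by
    rw [← h26]; field_simp; ring
  have hc : (q + β * (δ - ε)) * e₁ * e₂ + β * δ * (e₁ + e₂ + 1) = 0 := by
    refine (mul_eq_zero.mp ?_).resolve_left two_ne_zero
    rw [two_mul_constant_coeff_eq_cubic hs hp, ← h24]; field_simp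
  rw [reduced_poly_eq_quadratic, hs, hp, hc]
  ring
end
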